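/- Let p, q be positive integers with 2 < p/q < 4 and p odd. In the circular clique K_{p/q}, for every closed walk W from vertex 0 there exists an integer d such that W ~ O^d, where O is the closed walk of length p whose (i+1)-th edge goes from i·⌈p/2⌉ mod p to (i+1)·⌈p/2⌉ mod p. Consequently the group of ~-classes of closed walks based at 0 is isomorphic to the integers Z. -/

import Mathlib

open SimpleGraph

variable {α β γ : Type*}

/-- Tensor (categorical) product of simple graphs. -/
def tensor (G : SimpleGraph α) (H : SimpleGraph β) : SimpleGraph (α × β) where
  Adj x y := G.Adj x.1 y.1 ∧ H.Adj x.2 y.2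
  symm := ⟨fun _ _ ⟨h1, h2⟩ => ⟨h1.symm, h2.symm⟩⟩
  loopless := ⟨fun x ⟨h1, _⟩ => G.irrefl h1⟩

/-- Projection of a walk in the tensor product to the first factor. -/
def projG {G : SimpleGraph α} {H : SimpleGraph β} :
    ∀ {x y : α × β}, (tensor G H).Walk x y → G.Walk x.1 y.1
  | _, _, SimpleGraph.Walk.nil => SimpleGraph.Walk.nil
  | _, _, SimpleGraph.Walk.cons h p => SimpleGraph.Walk.cons h.1 (projG p)

/-- Projection of a walk in the tensor product to the second factor. -/
def projH {G : SimpleGraph α} {H : SimpleGraph β} :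
    ∀ {x y : α × β}, (tensor G H).Walk x y → H.Walk x.2 y.2
  | _, _, SimpleGraph.Walk.nil => SimpleGraph.Walk.nil
  | _, _, SimpleGraph.Walk.cons h p => SimpleGraph.Walk.cons h.2 (projH p)

/-- One-step reduction: deleting a consecutive backtracking pair `e, e⁻¹`. -/
inductive RedStep (G : SimpleGraph α) : ∀ {u v : α}, G.Walk u v → G.Walk u v → Prop
  | cancel {u v a b : α} (h : G.Adj a b) (p : G.Walk u a) (q : G.Walk a v) :
      RedStep G (p.append (SimpleGraph.Walk.cons h (SimpleGraph.Walk.cons h.symm q)))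
        (p.append q)

/-- A walk is reduced if no backtracking cancellation applies to it. -/
def Reduced {G : SimpleGraph α} {u v : α} (W : G.Walk u v) : Prop :=
  ∀ W', ¬ RedStep G W W'

/-- Homotopy of walks: equivalence generated by cancellations. -/
def RedEquiv (G : SimpleGraph α) {u v : α} (W W' : G.Walk u v) : Prop :=
  Relation.EqvGen (fun p q => RedStep G p q) W W'

/-- One elementary step of square-equivalence. -/
inductive SqStep (G : SimpleGraph α) : ∀ {u v : α}, G.Walk u v → G.Walk u v → Prop
  | cancel {u v a b : α} (h : G.Adj a b) (p : G.Walk u a) (q : G.Walk a v) :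
      SqStep G (p.append (SimpleGraph.Walk.cons h (SimpleGraph.Walk.cons h.symm q)))
        (p.append q)
  | square {u v a b c d : α} (hab : G.Adj a b) (hbc : G.Adj b c) (had : G.Adj a d)
      (hdc : G.Adj d c) (p : G.Walk u a) (q : G.Walk c v) :
      SqStep G (p.append (SimpleGraph.Walk.cons hab (SimpleGraph.Walk.cons hbc q)))
        (p.append (SimpleGraph.Walk.cons had (SimpleGraph.Walk.cons hdc q)))

/-- Square-equivalence of walks. -/
def SqEquiv (G : SimpleGraph α) {u v : α} (W W' : G.Walk u v) : Prop :=
  Relation.EqvGen (fun p q => SqStep G p q) W W'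

/-- Natural-number power of a closed walk (iterated concatenation). -/
def wpow {G : SimpleGraph α} {u : α} (W : G.Walk u u) : ℕ → G.Walk u u
  | 0 => SimpleGraph.Walk.nil
  | n + 1 => W.append (wpow W n)

/-- Integer power of a closed walk. -/
def wzpow {G : SimpleGraph α} {u : α} (W : G.Walk u u) : ℤ → G.Walk u u
  | Int.ofNat n => wpow W n
  | Int.negSucc n => wpow W.reverse (n + 1)

/-- A walk `p` is a prefix of `q` (same starting vertex). -/
def WalkPrefix {G : SimpleGraph α} {u x y : α} (p : G.Walk u x) (q : G.Walk u y) : Prop :=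
  ∃ r : G.Walk x y, q = p.append r

/-- `K` is square-free: every square is trivial. -/
def SqFree (K : SimpleGraph γ) : Prop :=
  ∀ a b c d : γ, K.Adj a b → K.Adj b c → K.Adj c d → K.Adj d a → a = c ∨ b = d

/-- The circular clique `K_{p/q}` on `ZMod p`. -/
def circClique (p q : ℕ) : SimpleGraph (ZMod p) where
  Adj i j := i ≠ j ∧ ∃ k : ℕ, q ≤ k ∧ k ≤ p - q ∧ (j = i + (k : ZMod p) ∨ i = j + (k : ZMod p))
  symm := by
    constructor
    rintro i j ⟨hne, k, h1, h2, h3 | h3⟩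
    · exact ⟨hne.symm, k, h1, h2, Or.inr h3⟩
    · exact ⟨hne.symm, k, h1, h2, Or.inl h3⟩
  loopless := ⟨fun i h => h.1 rfl⟩


/-!
Measure the displacement of a step `u → v` of `K_{p/q}` by the representative `disp u v` of
`v - u` in `[0, p)`; it lies in `[q, p - q]`. Summing `2 · disp - p` over a walk gives a winding
number. The two sides of a square have displacement sums in `[2q, 2p - 2q]`, a window shorter
than `p` since `p < 4q`, and congruent mod `p`, hence equal; so the winding number is a
square-invariant, and it is `d · p` on `O^d`.

Conversely write `p = 2t + 1`. Inserting a backtrack `b → x → b` after a step `u → b` and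
rotating the square on `u → b → x` replaces that step by one whose displacement is closer to
`{t, t + 1}`, followed by two steps of displacement `t` or `t + 1`; hence every walk is
equivalent to one with all displacements in `{t, t + 1}`. Adjacent steps `t`, `t + 1` cancel,
leaving a walk with constant displacement `t + 1` (a power of `O`) or `t` (a power of `O⁻¹`).
-/

section SquareEquivalence

variable {G : SimpleGraph α}

lemma SqStep.append_left {u v w : α} (V : G.Walk u v) {W W' : G.Walk v w}
    (h : SqStep G W W') : SqStep G (V.append W) (V.append W') := by
  cases h with
  | cancel e pre suf =>
    rw [Walk.append_assoc, Walk.append_assoc]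
    exact SqStep.cancel e (V.append pre) suf
  | square hab hbc had hdc pre suf =>
    rw [Walk.append_assoc, Walk.append_assoc]
    exact SqStep.square hab hbc had hdc (V.append pre) suf

lemma SqStep.append_right {u v w : α} (V : G.Walk v w) {W W' : G.Walk u v}
    (h : SqStep G W W') : SqStep G (W.append V) (W'.append V) := by
  cases h with
  | cancel e pre suf =>
    rw [← Walk.append_assoc, ← Walk.append_assoc]
    exact SqStep.cancel e pre (suf.append V)
  | square hab hbc had hdc pre suf =>
    rw [← Walk.append_assoc, ← Walk.append_assoc]
    exact SqStep.square hab hbc had hdc pre (suf.append V)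

lemma SqEquiv.map {u v u' v' : α} {f : G.Walk u v → G.Walk u' v'}
    (hf : ∀ W W', SqStep G W W' → SqStep G (f W) (f W')) {W W' : G.Walk u v}
    (h : SqEquiv G W W') : SqEquiv G (f W) (f W') := by
  induction h with
  | rel _ _ h => exact Relation.EqvGen.rel _ _ (hf _ _ h)
  | refl => exact Relation.EqvGen.refl _
  | symm _ _ _ ih => exact Relation.EqvGen.symm _ _ ih
  | trans _ _ _ _ _ ih₁ ih₂ => exact Relation.EqvGen.trans _ _ _ ih₁ ih₂

lemma SqEquiv.refl {u v : α} (W : G.Walk u v) : SqEquiv G W W := Relation.EqvGen.refl W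

lemma SqStep.sqEquiv {u v : α} {W W' : G.Walk u v} (h : SqStep G W W') : SqEquiv G W W' :=
  Relation.EqvGen.rel _ _ h

lemma SqEquiv.symm {u v : α} {W W' : G.Walk u v} (h : SqEquiv G W W') : SqEquiv G W' W :=
  Relation.EqvGen.symm _ _ h

lemma SqEquiv.trans {u v : α} {W₁ W₂ W₃ : G.Walk u v} (h₁ : SqEquiv G W₁ W₂)
    (h₂ : SqEquiv G W₂ W₃) : SqEquiv G W₁ W₃ :=
  Relation.EqvGen.trans _ _ _ h₁ h₂

lemma SqEquiv.append {u v w : α} {W₁ W₁' : G.Walk u v} {W₂ W₂' : G.Walk v w}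
    (h₁ : SqEquiv G W₁ W₁') (h₂ : SqEquiv G W₂ W₂') :
    SqEquiv G (W₁.append W₂) (W₁'.append W₂') :=
  (h₁.map fun _ _ => SqStep.append_right W₂).trans (h₂.map fun _ _ => SqStep.append_left W₁')

end SquareEquivalence

section Powers

variable {G : SimpleGraph α} {u : α}

lemma length_wpow (W : G.Walk u u) (n : ℕ) : (wpow W n).length = n * W.length := by
  induction n with
  | zero => simp [wpow]
  | succ n ih => rw [wpow, Walk.length_append, ih]; ring

lemma wzpow_natCast (W : G.Walk u u) (n : ℕ) : wzpow W n = wpow W n := rfl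

lemma wzpow_neg_natCast (W : G.Walk u u) (n : ℕ) : wzpow W (-n) = wpow W.reverse n := by
  cases n <;> rfl

end Powers

namespace CircClique

variable {p q : ℕ}

def disp (u v : ZMod p) : ℕ := (v - u).val

@[simp] lemma disp_self (u : ZMod p) : disp u u = 0 := by simp [disp]

lemma disp_eq_of_sub_eq {u v : ZMod p} {k : ℕ} (hk : k < p) (h : v - u = k) : disp u v = k := by
  rw [disp, h, ZMod.val_cast_of_lt hk]

section Displacement

variable [NeZero p]

lemma natCast_disp (u v : ZMod p) : (disp u v : ZMod p) = v - u := ZMod.natCast_zmod_val _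

lemma eq_of_disp_eq {u v w : ZMod p} (h : disp u v = disp u w) : v = w := by
  have := natCast_disp u v
  rwa [h, natCast_disp, sub_left_inj, eq_comm] at this

lemma eq_of_disp_add_disp_eq {u v w : ZMod p} (h : disp u v + disp v w = p) : w = u := by
  have := congrArg (fun k : ℕ => (k : ZMod p)) h
  simp only [Nat.cast_add, natCast_disp, ZMod.natCast_self] at this
  exact sub_eq_zero.1 (by rw [← this]; ring)

lemma disp_add_disp_swap {u v : ZMod p} (h : u ≠ v) : disp u v + disp v u = p := by
  rw [disp, disp, ← neg_sub v u, ZMod.neg_val, if_neg (sub_ne_zero.2 h.symm)]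
  have := ZMod.val_lt (v - u)
  omega

lemma circClique_adj_iff (hq : 0 < q) {u v : ZMod p} :
    (circClique p q).Adj u v ↔ q ≤ disp u v ∧ disp u v ≤ p - q := by
  constructor
  · rintro ⟨hne, k, hk₁, hk₂, hk | hk⟩
    · have : disp u v = k := disp_eq_of_sub_eq (by omega) (by rw [hk]; ring)
      omega
    · have : disp v u = k := disp_eq_of_sub_eq (by omega) (by rw [hk]; ring)
      have := disp_add_disp_swap hne
      omega
  · rintro ⟨h₁, h₂⟩
    refine ⟨fun huv => ?_, disp u v, h₁, h₂, Or.inl (by rw [natCast_disp]; ring)⟩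
    rw [huv, disp_self] at h₁
    omega

lemma disp_add_disp_eq_of_square (hq : 0 < q) (h4 : p < 4 * q) {a b c d : ZMod p}
    (hab : (circClique p q).Adj a b) (hbc : (circClique p q).Adj b c)
    (had : (circClique p q).Adj a d) (hdc : (circClique p q).Adj d c) :
    disp a b + disp b c = disp a d + disp d c := by
  rw [circClique_adj_iff hq] at hab hbc had hdc
  have hcong : ((disp a b + disp b c : ℕ) : ZMod p) = (disp a d + disp d c : ℕ) := by
    push_cast [natCast_disp]; ring
  refine ((ZMod.natCast_eq_natCast_iff _ _ _).1 hcong).eq_of_abs_lt (abs_sub_lt_iff.2 ?_)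
  constructor <;> push_cast <;> omega

end Displacement

section Winding

variable {G : SimpleGraph (ZMod p)}

def winding {u v : ZMod p} (W : G.Walk u v) : ℤ :=
  (W.darts.map fun d => 2 * (disp d.fst d.snd : ℤ) - p).sum

def DispsIn (S : Set ℕ) {u v : ZMod p} (W : G.Walk u v) : Prop :=
  ∀ d ∈ W.darts, disp d.fst d.snd ∈ S

variable {u v w : ZMod p}

@[simp] lemma winding_nil : winding (Walk.nil : G.Walk u u) = 0 := rfl

@[simp] lemma winding_cons (h : G.Adj u v) (W : G.Walk v w) :
    winding (Walk.cons h W) = 2 * (disp u v : ℤ) - p + winding W := by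
  simp [winding]

@[simp] lemma winding_append (W : G.Walk u v) (W' : G.Walk v w) :
    winding (W.append W') = winding W + winding W' := by
  simp [winding]

lemma winding_reverse [NeZero p] (W : G.Walk u v) : winding W.reverse = -winding W := by
  induction W with
  | nil => rfl
  | cons h W ih =>
    have := disp_add_disp_swap h.ne
    simp only [Walk.reverse_cons, winding_append, ih, winding_cons, winding_nil]
    omega

lemma natCast_winding [NeZero p] (W : G.Walk u v) : (winding W : ZMod p) = 2 * (v - u) := by
  induction W with
  | nil => simp
  | cons h W ih => push_cast [winding_cons, ih, natCast_disp, ZMod.natCast_self]; ring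

lemma winding_wpow {u : ZMod p} (W : G.Walk u u) (n : ℕ) :
    winding (wpow W n) = n * winding W := by
  induction n with
  | zero => simp [wpow]
  | succ n ih => rw [wpow, winding_append, ih]; push_cast; ring

lemma winding_wzpow [NeZero p] {u : ZMod p} (W : G.Walk u u) (d : ℤ) :
    winding (wzpow W d) = d * winding W := by
  obtain ⟨n, rfl | rfl⟩ := d.eq_nat_or_neg
  · rw [wzpow_natCast, winding_wpow]
  · rw [wzpow_neg_natCast, winding_wpow, winding_reverse]; ring

@[simp] lemma dispsIn_nil {S : Set ℕ} : DispsIn S (Walk.nil : G.Walk u u) := by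
  simp [DispsIn]

@[simp] lemma dispsIn_cons {S : Set ℕ} (h : G.Adj u v) (W : G.Walk v w) :
    DispsIn S (Walk.cons h W) ↔ disp u v ∈ S ∧ DispsIn S W := by
  simp [DispsIn]

@[simp] lemma dispsIn_append {S : Set ℕ} (W : G.Walk u v) (W' : G.Walk v w) :
    DispsIn S (W.append W') ↔ DispsIn S W ∧ DispsIn S W' := by
  simp [DispsIn, or_imp, forall_and]

lemma DispsIn.mono {S T : Set ℕ} (hST : S ⊆ T) {W : G.Walk u v} (h : DispsIn S W) :
    DispsIn T W :=
  fun d hd => hST (h d hd)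

lemma dispsIn_wpow {S : Set ℕ} {u : ZMod p} {W : G.Walk u u} (h : DispsIn S W) (n : ℕ) :
    DispsIn S (wpow W n) := by
  induction n with
  | zero => exact dispsIn_nil
  | succ n ih => exact (dispsIn_append _ _).2 ⟨h, ih⟩

lemma DispsIn.reverse [NeZero p] {c : ℕ} {W : G.Walk u v} (h : DispsIn {c} W) :
    DispsIn {p - c} W.reverse := by
  induction W with
  | nil => exact dispsIn_nil
  | cons e W ih =>
    rw [dispsIn_cons] at h
    have := disp_add_disp_swap e.ne
    simp only [Walk.reverse_cons, dispsIn_append, dispsIn_cons, dispsIn_nil, Set.mem_singleton_iff]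
      at h ⊢
    exact ⟨ih h.2, by omega, trivial⟩

lemma DispsIn.winding_eq {c : ℕ} {W : G.Walk u v} (h : DispsIn {c} W) :
    winding W = W.length * (2 * c - p) := by
  induction W with
  | nil => simp
  | cons e W ih =>
    simp only [dispsIn_cons, Set.mem_singleton_iff] at h
    rw [winding_cons, ih h.2, h.1, Walk.length_cons]; push_cast; ring

lemma DispsIn.eq_of_length_eq [NeZero p] {c : ℕ} {W W' : G.Walk u v} (h : DispsIn {c} W)
    (h' : DispsIn {c} W') (hlen : W.length = W'.length) : W = W' := by
  induction W with
  | nil => cases W' with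
    | nil => rfl
    | cons => simp at hlen
  | cons e W ih =>
    cases W' with
    | nil => simp at hlen
    | cons e' W' =>
      simp only [dispsIn_cons, Set.mem_singleton_iff] at h h'
      obtain rfl := eq_of_disp_eq (h.1.trans h'.1.symm)
      rw [ih h.2 h'.2 (by simpa using hlen)]

lemma dispsIn_of_getVert {c : ℕ} (hc : c < p) [NeZero p] {W : G.Walk u v}
    (hW : ∀ i ≤ W.length, W.getVert i = u + (i * c : ℕ)) : DispsIn {c} W := by
  intro d hd
  obtain ⟨n, hn, rfl⟩ := List.getElem_of_mem hd
  rw [Walk.length_darts] at hn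
  rw [Walk.darts_getElem_eq_getVert, Set.mem_singleton_iff]
  refine disp_eq_of_sub_eq hc ?_
  simp only [hW n hn.le, hW (n + 1) hn]
  push_cast; ring

end Winding

section Reduction

variable [NeZero p]

lemma winding_eq_of_sqEquiv (hq : 0 < q) (h4 : p < 4 * q) {u v : ZMod p}
    {W W' : (circClique p q).Walk u v} (h : SqEquiv (circClique p q) W W') :
    winding W = winding W' := by
  induction h with
  | rel _ _ h =>
    cases h with
    | cancel e pre suf =>
      have := disp_add_disp_swap e.ne
      simp only [winding_append, winding_cons]
      omega
    | square hab hbc had hdc pre suf =>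
      have := disp_add_disp_eq_of_square hq h4 hab hbc had hdc
      simp only [winding_append, winding_cons]
      omega
  | refl => rfl
  | symm _ _ _ ih => exact ih.symm
  | trans _ _ _ _ _ ih₁ ih₂ => exact ih₁.trans ih₂

lemma exists_sqEquiv_split (hq : 0 < q) {u b : ZMod p} (h : (circClique p q).Adj u b)
    {a c : ℕ} (ha : q ≤ a ∧ a ≤ p - q) (hc : q ≤ c ∧ c ≤ p - q) (hsum : a + 2 * c = disp u b + p) :
    ∃ (d : ZMod p) (h₁ : (circClique p q).Adj u d) (W : (circClique p q).Walk d b),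
      disp u d = a ∧ DispsIn {c} W ∧ SqEquiv (circClique p q) h.toWalk (Walk.cons h₁ W) := by
  have hcast : (a : ZMod p) + 2 * c = b - u := by
    have := congrArg (Nat.cast : ℕ → ZMod p) hsum
    push_cast [natCast_disp, ZMod.natCast_self] at this
    rw [this]; ring
  set x := b - (c : ZMod p)
  set d := u + (a : ZMod p)
  have hxb : disp x b = c := disp_eq_of_sub_eq (by omega) (by ring)
  have hbx : disp b x = p - c := by
    have := disp_add_disp_swap (u := x) (v := b) (by intro hx; rw [hx, disp_self] at hxb; omega)
    omega
  have hud : disp u d = a := disp_eq_of_sub_eq (by omega) (by ring)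
  have hdx : disp d x = c := disp_eq_of_sub_eq (by omega) (by linear_combination -hcast)
  have e : (circClique p q).Adj b x := (circClique_adj_iff hq).2 (by omega)
  have h₁ : (circClique p q).Adj u d := (circClique_adj_iff hq).2 (by omega)
  have h₂ : (circClique p q).Adj d x := (circClique_adj_iff hq).2 (by omega)
  refine ⟨d, h₁, Walk.cons h₂ (Walk.cons e.symm Walk.nil), hud, by simp [hdx, hxb], ?_⟩
  exact (SqStep.cancel e h.toWalk Walk.nil).sqEquiv.symm.trans
    (SqStep.square h e h₁ h₂ Walk.nil (Walk.cons e.symm Walk.nil)).sqEquiv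

variable {t : ℕ}

lemma exists_dispsIn_sqEquiv_toWalk (hq : 0 < q) (h2 : 2 * q < p) (hpt : p = 2 * t + 1)
    {u b : ZMod p} (h : (circClique p q).Adj u b) :
    ∃ U : (circClique p q).Walk u b, DispsIn {t, t + 1} U ∧
      SqEquiv (circClique p q) h.toWalk U := by
  obtain ⟨n, hn⟩ : ∃ n, (2 * (disp u b : ℤ) - p).natAbs = n := ⟨_, rfl⟩
  induction n using Nat.strong_induction_on generalizing u b with
  | _ n ih =>
    have hD := (circClique_adj_iff hq).1 h
    by_cases hunit : disp u b = t ∨ disp u b = t + 1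
    · exact ⟨h.toWalk, by simpa [Adj.toWalk] using hunit, .refl _⟩
    obtain ⟨a, c, ha, hc, hsum, hlt⟩ : ∃ a c, (q ≤ a ∧ a ≤ p - q) ∧ (c = t ∨ c = t + 1) ∧
        a + 2 * c = disp u b + p ∧ (2 * (a : ℤ) - p).natAbs < n := by
      by_cases hsmall : disp u b < t
      · exact ⟨disp u b + 1, t, by omega, .inl rfl, by omega, by omega⟩
      · exact ⟨disp u b - 1, t + 1, by omega, .inr rfl, by omega, by omega⟩
    obtain ⟨d, h₁, W, hd, hW, hsplit⟩ := exists_sqEquiv_split hq h ha (by omega) hsum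
    obtain ⟨U, hU, hequiv⟩ := ih _ hlt h₁ (by rw [hd])
    refine ⟨U.append W, (dispsIn_append _ _).2 ⟨hU, hW.mono ?_⟩,
      hsplit.trans (hequiv.append (.refl W))⟩
    simpa using hc

lemma exists_dispsIn_sqEquiv (hq : 0 < q) (h2 : 2 * q < p) (hpt : p = 2 * t + 1) {u v : ZMod p}
    (W : (circClique p q).Walk u v) :
    ∃ U : (circClique p q).Walk u v, DispsIn {t, t + 1} U ∧ SqEquiv (circClique p q) W U := by
  induction W with
  | nil => exact ⟨Walk.nil, dispsIn_nil, .refl _⟩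
  | cons h W ih =>
    obtain ⟨U₁, hU₁, h₁⟩ := exists_dispsIn_sqEquiv_toWalk hq h2 hpt h
    obtain ⟨U₂, hU₂, h₂⟩ := ih
    exact ⟨U₁.append U₂, (dispsIn_append _ _).2 ⟨hU₁, hU₂⟩, h₁.append h₂⟩

lemma exists_sqEquiv_dispsIn_singleton {G : SimpleGraph (ZMod p)} (hpt : p = 2 * t + 1)
    {u v : ZMod p} {U : G.Walk u v} (hU : DispsIn {t, t + 1} U) :
    ∃ c, (c = t ∨ c = t + 1) ∧ ∃ M : G.Walk u v, DispsIn {c} M ∧ SqEquiv G U M := by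
  induction U with
  | nil => exact ⟨t, .inl rfl, Walk.nil, dispsIn_nil, .refl _⟩
  | @cons u b v h U ih =>
    rw [dispsIn_cons] at hU
    obtain ⟨c, hc, M, hM, hUM⟩ := ih hU.2
    have hhead : SqEquiv G (Walk.cons h U) (Walk.cons h M) := (SqEquiv.refl h.toWalk).append hUM
    have hD : disp u b = t ∨ disp u b = t + 1 := by simpa using hU.1
    by_cases hDc : disp u b = c
    · exact ⟨c, hc, Walk.cons h M, (dispsIn_cons _ _).2 ⟨hDc, hM⟩, hhead⟩
    cases M with
    | nil => exact ⟨disp u b, hD, h.toWalk, by simp [Adj.toWalk], hhead⟩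
    | @cons _ w _ h' M' =>
      simp only [dispsIn_cons, Set.mem_singleton_iff] at hM
      obtain rfl := eq_of_disp_add_disp_eq (u := u) (v := b) (w := w) (by omega)
      exact ⟨c, hc, M', hM.2, hhead.trans (SqStep.cancel h Walk.nil M').sqEquiv⟩

lemma exists_eq_wzpow_of_dispsIn {G : SimpleGraph (ZMod p)} (hpt : p = 2 * t + 1) {u : ZMod p}
    {O : G.Walk u u} (hO : DispsIn {t + 1} O) (hOlen : O.length = p) {c : ℕ}
    (hc : c = t ∨ c = t + 1) {M : G.Walk u u} (hM : DispsIn {c} M) : ∃ d : ℤ, M = wzpow O d := by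
  obtain ⟨k, hk⟩ : p ∣ M.length := by
    have h0 := natCast_winding M
    rw [sub_self, mul_zero, hM.winding_eq, ZMod.intCast_zmod_eq_zero_iff_dvd] at h0
    have hunit : IsUnit (2 * (c : ℤ) - p) := Int.isUnit_iff.2 (by omega)
    exact Int.natCast_dvd_natCast.1 (hunit.dvd_mul_right.1 h0)
  rcases hc with hc | hc <;> rw [hc] at hM
  · have hOrev : DispsIn {t} O.reverse := by
      simpa [show p - (t + 1) = t by omega] using hO.reverse
    refine ⟨-k, ?_⟩
    rw [wzpow_neg_natCast]
    refine hM.eq_of_length_eq (dispsIn_wpow hOrev k) ?_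
    rw [length_wpow, Walk.length_reverse, hOlen, hk, mul_comm]
  · refine ⟨k, hM.eq_of_length_eq (dispsIn_wpow hO k) ?_⟩
    rw [wzpow_natCast, length_wpow, hOlen, hk, mul_comm]

end Reduction

end CircClique

theorem circClique_pi_eq_int_general {p q : ℕ} (h2 : 2 * q < p) (h4 : p < 4 * q)
    (hp : Odd p) (O : (circClique p q).Walk (0 : ZMod p) 0) (hOlen : O.length = p)
    (hO : ∀ i ≤ p, O.getVert i = ((i * ((p + 1) / 2) : ℕ) : ZMod p)) :
    (∀ W : (circClique p q).Walk (0 : ZMod p) 0, ∃ d : ℤ, SqEquiv (circClique p q) W (wzpow O d)) ∧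
    (∀ d d' : ℤ, SqEquiv (circClique p q) (wzpow O d) (wzpow O d') → d = d') := by
  obtain ⟨t, hpt⟩ := hp
  have hq : 0 < q := by omega
  have : NeZero p := ⟨by omega⟩
  have hOdisp : CircClique.DispsIn {t + 1} O :=
    CircClique.dispsIn_of_getVert (by omega) fun i hi => by
      rw [hO i (hOlen ▸ hi), zero_add, show (p + 1) / 2 = t + 1 by omega]
  refine ⟨fun W => ?_, fun d d' h => ?_⟩
  · obtain ⟨U, hU, hWU⟩ := CircClique.exists_dispsIn_sqEquiv hq h2 hpt W
    obtain ⟨c, hc, M, hM, hUM⟩ := CircClique.exists_sqEquiv_dispsIn_singleton hpt hU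
    obtain ⟨d, rfl⟩ := CircClique.exists_eq_wzpow_of_dispsIn hpt hOdisp hOlen hc hM
    exact ⟨d, hWU.trans hUM⟩
  · have hwO : CircClique.winding O = p := by
      rw [hOdisp.winding_eq, hOlen, hpt]; push_cast; ring
    have := CircClique.winding_eq_of_sqEquiv hq h4 h
    rw [CircClique.winding_wzpow, CircClique.winding_wzpow, hwO] at this
    exact mul_right_cancel₀ (by omega) this

/-- in `K_{p/q}` with `2 < p/q < 4` and `p` odd, every closed walk based
at `0` is square-equivalent to a power of the generator `O` (the closed walk of
length `p` whose `(i+1)`-th edge goes from `i·⌈p/2⌉` to `(i+1)·⌈p/2⌉` mod `p`),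
and distinct powers of `O` are inequivalent; hence the group of `~`-classes of
closed walks based at `0` is isomorphic to `ℤ`. -/
theorem circClique_pi_eq_int {p q : ℕ} (hq : 0 < q) (h2 : 2 * q < p) (h4 : p < 4 * q)
    (hp : Odd p) (O : (circClique p q).Walk (0 : ZMod p) 0) (hOlen : O.length = p)
    (hO : ∀ i ≤ p, O.getVert i = ((i * ((p + 1) / 2) : ℕ) : ZMod p)) :
    (∀ W : (circClique p q).Walk (0 : ZMod p) 0, ∃ d : ℤ, SqEquiv (circClique p q) W (wzpow O d)) ∧
    (∀ d d' : ℤ, SqEquiv (circClique p q) (wzpow O d) (wzpow O d') → d = d') :=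
  circClique_pi_eq_int_general h2 h4 hp O hOlen hO
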